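/- Let Φ be an injective map from a set X into a Hilbert space H. Then for every t > 0 the Gaussian-type kernel (x,y) ↦ exp(−t ‖Φ(x) − Φ(y)‖²_H) is strictly positive definite on X × X. -/

import Mathlib

open scoped ComplexOrder ComplexConjugate

/-- `k` is strictly positive definite on `X`. -/
def IsStrictPosKernel {X : Type*} (k : X → X → ℂ) : Prop :=
  ∀ (n : ℕ) (x : Fin n → X), Function.Injective x →
    ∀ c : Fin n → ℂ, c ≠ 0 →
      0 < ∑ i, ∑ j, c i * conj (c j) * k (x i) (x j)

/-!
Expanding `‖a - b‖² = ‖a‖² + ‖b‖² - 2⟪a, b⟫`, the Gaussian matrix of points `yᵢ` is the matrix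
`exp (2t⟪yᵢ, yⱼ⟫) = ∑ₘ (2t)ᵐ / m! • G^⊙m` (`G` the Gram matrix) conjugated by a positive
diagonal matrix. Each Hadamard power `G^⊙m` is positive semidefinite by Schur's product theorem.
If `v` has norm at most one and `wᵢ = ⟪v, yᵢ⟫` are pairwise distinct, Cauchy–Schwarz gives
`G ≥ w wᵀ`, hence `G^⊙m ≥ wᵐ (wᵐ)ᵀ`; by Vandermonde some moment `∑ cᵢ wᵢᵐ` of a nonzero `c`
is nonzero, so the quadratic form is positive. Complex coefficients reduce to real ones because
the matrix is real symmetric.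
-/

open Matrix Function
open scoped RealInnerProductSpace Nat

namespace Matrix

variable {ι 𝕜 : Type*} [Fintype ι] [RCLike 𝕜]

theorem PosSemidef.map_pow {A : Matrix ι ι 𝕜} (hA : A.PosSemidef) (m : ℕ) :
    (A.map (· ^ m)).PosSemidef := by
  induction m with
  | zero =>
    convert posSemidef_vecMulVec_self_star (1 : ι → 𝕜) using 1
    ext; simp [vecMulVec_apply]
  | succ m ih =>
    convert ih.hadamard hA using 1
    ext; simp [pow_succ]

theorem PosSemidef.map_pow_sub_map_pow {A B : Matrix ι ι 𝕜} (hB : B.PosSemidef)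
    (hAB : (A - B).PosSemidef) (m : ℕ) : (A.map (· ^ m) - B.map (· ^ m)).PosSemidef := by
  induction m with
  | zero =>
    convert PosSemidef.zero (n := ι) (R := 𝕜) using 1
    ext; simp
  | succ m ih =>
    have hA : A.PosSemidef := by simpa using hAB.add hB
    convert (ih.hadamard hA).add ((hB.map_pow m).hadamard hAB) using 1
    ext
    simp only [pow_succ, sub_apply, map_apply, add_apply, hadamard_apply]
    ring

theorem PosDef.map_ofReal {A : Matrix ι ι ℝ} (hA : A.PosDef) :
    (A.map ((↑) : ℝ → ℂ)).PosDef := by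
  rw [posDef_iff_dotProduct_mulVec] at hA ⊢
  obtain ⟨hA, hpos⟩ := hA
  refine ⟨IsHermitian.ext fun i j => by simpa using congrArg ((↑) : ℝ → ℂ) (hA.apply i j),
    fun x hx => ?_⟩
  set a : ι → ℝ := fun i => (x i).re
  set b : ι → ℝ := fun i => (x i).im
  have hsymm : b ⬝ᵥ A *ᵥ a = a ⬝ᵥ A *ᵥ b := by
    rw [dotProduct_mulVec, dotProduct_comm, ← mulVec_transpose,
      ← conjTranspose_eq_transpose_of_trivial, hA.eq]
  have key : star x ⬝ᵥ A.map (↑) *ᵥ x = ((a ⬝ᵥ A *ᵥ a + b ⬝ᵥ A *ᵥ b : ℝ) : ℂ) := by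
    apply Complex.ext
    · simp [a, b, dotProduct, mulVec, Complex.re_sum, Complex.mul_re, Finset.sum_add_distrib]
    · simpa [a, b, dotProduct, mulVec, Complex.im_sum, Complex.mul_im, ← sub_eq_add_neg,
        Finset.sum_sub_distrib, sub_eq_zero] using hsymm.symm
  have hab : a ≠ 0 ∨ b ≠ 0 := by
    by_contra! h
    exact hx (funext fun i => Complex.ext (congrFun h.1 i) (congrFun h.2 i))
  have hnonneg {v : ι → ℝ} : 0 ≤ v ⬝ᵥ A *ᵥ v := by
    rcases eq_or_ne v 0 with rfl | hv
    · simp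
    · exact (hpos hv).le
  rw [key, Complex.zero_lt_real]
  rcases hab with ha | hb
  · exact add_pos_of_pos_of_nonneg (hpos ha) hnonneg
  · exact add_pos_of_nonneg_of_pos hnonneg (hpos hb)

theorem hasSum_dotProduct_map_exp_mulVec (A : Matrix ι ι ℝ) (x : ι → ℝ) :
    HasSum (fun m => (m ! : ℝ)⁻¹ * (x ⬝ᵥ A.map (· ^ m) *ᵥ x)) (x ⬝ᵥ A.map Real.exp *ᵥ x) := by
  simp only [dotProduct, mulVec, Finset.mul_sum, map_apply]
  refine hasSum_sum fun i _ => hasSum_sum fun j _ => ?_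
  have h := (NormedSpace.expSeries_div_hasSum_exp (A i j)).mul_left (x i * x j)
  rw [← Real.exp_eq_exp_ℝ] at h
  rw [show x i * (Real.exp (A i j) * x j) = x i * x j * Real.exp (A i j) by ring]
  rwa [show (fun m => (m ! : ℝ)⁻¹ * (x i * (A i j ^ m * x j))) =
    fun m => x i * x j * (A i j ^ m / m !) from funext fun m => by ring]

end Matrix

section InnerProductSpace

variable {ι E : Type*} [NormedAddCommGroup E] [InnerProductSpace ℝ E]

theorem exists_norm_le_one_injective_inner [Finite ι] {y : ι → E} (hy : Injective y) :
    ∃ v : E, ‖v‖ ≤ 1 ∧ Injective fun i => ⟪v, y i⟫ := by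
  obtain ⟨u, hu⟩ := Module.Dual.exists_forall_ne_zero_of_forall_exists (K := ℝ)
    (fun p : {p : ι × ι // p.1 ≠ p.2} => innerₛₗ ℝ (y p.1.1 - y p.1.2))
    fun p => ⟨y p.1.1 - y p.1.2, inner_self_ne_zero.mpr (sub_ne_zero.mpr (hy.ne p.2))⟩
  have hc : 0 < (‖u‖ + 1)⁻¹ := by positivity
  refine ⟨(‖u‖ + 1)⁻¹ • u, ?_, fun i j hij => ?_⟩
  · rw [norm_smul, Real.norm_of_nonneg hc.le, inv_mul_le_one₀ (by positivity)]
    linarith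
  · by_contra hne
    apply hu ⟨(i, j), hne⟩
    simp only [real_inner_smul_left, mul_right_inj' hc.ne'] at hij
    simp [real_inner_comm, hij]

theorem posSemidef_gram_sub_vecMulVec_inner [Fintype ι] (y : ι → E) {v : E} (hv : ‖v‖ ≤ 1) :
    (gram ℝ y - vecMulVec (fun i => ⟪v, y i⟫) fun i => ⟪v, y i⟫).PosSemidef := by
  refine posSemidef_iff_dotProduct_mulVec.mpr
    ⟨IsHermitian.ext fun i j => by simp [gram_apply, vecMulVec_apply, real_inner_comm, mul_comm],
      fun x => ?_⟩
  set u := ∑ i, x i • y i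
  have hgram : star x ⬝ᵥ gram ℝ y *ᵥ x = ‖u‖ ^ 2 := by
    rw [star_dotProduct_gram_mulVec, real_inner_self_eq_norm_sq]
  have hvec : star x ⬝ᵥ vecMulVec (fun i => ⟪v, y i⟫) (fun i => ⟪v, y i⟫) *ᵥ x = ⟪v, u⟫ ^ 2 := by
    simp only [dotProduct, Pi.star_apply, star_trivial, mulVec, vecMulVec_apply, Finset.mul_sum,
      inner_sum, real_inner_smul_right, sq, Finset.sum_mul, u]
    rw [Finset.sum_comm]
    exact Finset.sum_congr rfl fun i _ => Finset.sum_congr rfl fun j _ => by ring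
  have hcs : |⟪v, u⟫| ≤ ‖u‖ :=
    (abs_real_inner_le_norm v u).trans (mul_le_of_le_one_left (norm_nonneg u) hv)
  rw [sub_mulVec, dotProduct_sub, hgram, hvec, sub_nonneg]
  exact sq_le_sq' (abs_le.mp hcs).1 (abs_le.mp hcs).2

theorem dotProduct_map_pow_smul_gram_mulVec_ge [Fintype ι] (y : ι → E) {v : E} (hv : ‖v‖ ≤ 1)
    {s : ℝ} (hs : 0 ≤ s) (x : ι → ℝ) (m : ℕ) :
    s ^ m * (x ⬝ᵥ fun i => ⟪v, y i⟫ ^ m) ^ 2 ≤ x ⬝ᵥ (s • gram ℝ y).map (· ^ m) *ᵥ x := by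
  set w : ι → ℝ := fun i => ⟪v, y i⟫
  have hB : (s • vecMulVec w w).PosSemidef := (posSemidef_vecMulVec_self_star w).smul hs
  have hAB : (s • gram ℝ y - s • vecMulVec w w).PosSemidef := by
    rw [← smul_sub]; exact (posSemidef_gram_sub_vecMulVec_inner y hv).smul hs
  have hB_pow : (s • vecMulVec w w).map (· ^ m) =
      s ^ m • vecMulVec (fun i => w i ^ m) (fun i => w i ^ m) := by
    ext; simp [vecMulVec_apply, mul_pow]
  have := (posSemidef_iff_dotProduct_mulVec.mp (hB.map_pow_sub_map_pow hAB m)).2 x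
  rw [hB_pow, sub_mulVec, dotProduct_sub, sub_nonneg, smul_mulVec, vecMulVec_mulVec] at this
  simp only [dotProduct_smul, smul_eq_mul, MulOpposite.smul_eq_mul_unop, MulOpposite.unop_op,
    star_trivial, dotProduct_comm _ x] at this
  simpa only [sq] using this

theorem posDef_map_exp_smul_gram {n : ℕ} {s : ℝ} (hs : 0 < s) {y : Fin n → E}
    (hy : Injective y) : ((s • gram ℝ y).map Real.exp).PosDef := by
  obtain ⟨v, hv, hw⟩ := exists_norm_le_one_injective_inner hy
  refine posDef_iff_dotProduct_mulVec.mpr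
    ⟨IsHermitian.ext fun i j => by simp [gram_apply, real_inner_comm], fun x hx => ?_⟩
  obtain ⟨m, hm⟩ : ∃ m, (x ⬝ᵥ fun i => ⟪v, y i⟫ ^ m) ≠ 0 := by
    by_contra! h
    exact hx (eq_zero_of_forall_pow_sum_mul_pow_eq_zero hw fun m => by
      simpa [dotProduct] using h m)
  have hsum := hasSum_dotProduct_map_exp_mulVec (s • gram ℝ y) x
  have hlow := dotProduct_map_pow_smul_gram_mulVec_ge y hv hs.le x
  rw [star_trivial, ← hsum.tsum_eq]
  refine hsum.summable.tsum_pos (fun k => ?_) m ?_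
  · have : 0 ≤ s ^ k * (x ⬝ᵥ fun i => ⟪v, y i⟫ ^ k) ^ 2 := by positivity
    exact mul_nonneg (by positivity) (this.trans (hlow k))
  · have : 0 < s ^ m * (x ⬝ᵥ fun i => ⟪v, y i⟫ ^ m) ^ 2 := by positivity
    exact mul_pos (by positivity) (this.trans_le (hlow m))

theorem posDef_exp_neg_mul_norm_sub_sq {n : ℕ} {t : ℝ} (ht : 0 < t) {y : Fin n → E}
    (hy : Injective y) : (of fun i j => Real.exp (-t * ‖y i - y j‖ ^ 2)).PosDef := by
  set d : Fin n → ℝ := fun i => Real.exp (-t * ‖y i‖ ^ 2)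
  have hfactor : of (fun i j => Real.exp (-t * ‖y i - y j‖ ^ 2)) =
      star (diagonal d) * ((2 * t) • gram ℝ y).map Real.exp * diagonal d := by
    ext i j
    simp only [star_eq_conjTranspose, diagonal_conjTranspose, star_trivial, mul_diagonal,
      diagonal_mul, of_apply, map_apply, Matrix.smul_apply, gram_apply, d, smul_eq_mul]
    rw [← Real.exp_add, ← Real.exp_add, norm_sub_sq_real]
    ring_nf
  have hd : IsUnit (diagonal d) :=
    isUnit_diagonal.mpr (Pi.isUnit_iff.mpr fun i => (Real.exp_pos _).ne'.isUnit)
  rw [hfactor, hd.posDef_star_left_conjugate_iff]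
  exact posDef_map_exp_smul_gram (by positivity) hy

end InnerProductSpace

theorem IsStrictPosKernel.of_posDef {X : Type*} {k : X → X → ℂ}
    (hk : ∀ n (x : Fin n → X), Injective x → (of fun i j => k (x i) (x j)).PosDef) :
    IsStrictPosKernel k := by
  intro n x hx c hc
  have := (posDef_iff_dotProduct_mulVec.mp (hk n x hx)).2 (x := star c) (by simpa using hc)
  convert this using 1
  simp only [star_star, dotProduct, mulVec, of_apply, Pi.star_apply, Finset.mul_sum,
    starRingEnd_apply]
  exact Finset.sum_congr rfl fun i _ => Finset.sum_congr rfl fun j _ => by ring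

theorem exp_neg_dist_sq_isStrictPosKernel_general {X : Type*}
    {𝕜 H : Type*} [RCLike 𝕜] [NormedAddCommGroup H] [InnerProductSpace 𝕜 H]
    (Φ : X → H) (hΦ : Function.Injective Φ) (t : ℝ) (ht : 0 < t) :
    IsStrictPosKernel (fun x y => (Real.exp (-t * ‖Φ x - Φ y‖ ^ 2) : ℂ)) := by
  let _ : InnerProductSpace ℝ H := .rclikeToReal 𝕜 H
  exact .of_posDef fun n x hx => (posDef_exp_neg_mul_norm_sub_sq ht (hΦ.comp hx)).map_ofReal

/-- If `Φ : X → H` is an injective map into a Hilbert space, then for every `t > 0`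
the Gaussian-type kernel `(x,y) ↦ exp (−t ‖Φ x − Φ y‖²)` is strictly positive definite. -/
theorem exp_neg_dist_sq_isStrictPosKernel {X : Type*}
    {𝕜 H : Type*} [RCLike 𝕜] [NormedAddCommGroup H] [InnerProductSpace 𝕜 H] [CompleteSpace H]
    (Φ : X → H) (hΦ : Function.Injective Φ) (t : ℝ) (ht : 0 < t) :
    IsStrictPosKernel (fun x y => (Real.exp (-t * ‖Φ x - Φ y‖ ^ 2) : ℂ)) :=
  exp_neg_dist_sq_isStrictPosKernel_general (𝕜 := 𝕜) Φ hΦ t ht
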